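/- Let m ≥ 1 be an integer and let α, b, c be reals with 1/2 ≤ α < 1, 0 < b ≤ m, and 0 < c ≤ b/(m+1). Set v = 1 − (1−α)b/m − αb/(m+1) + (1−α)c/(m(m+1)). Then: (i) for every probability distribution q on ℕ with mean b and Σ_{i≥0} q(2i+1) ≥ c, one has H(y^{m,α}, q) ≥ v; and (ii) the probability distribution y = (1 − (b−c)/m)·δ_0 + c·u^o_{m+1} + ((b − c(m+1))/m)·u^e_m has mean b and satisfies Σ_{i≥0} y(2i+1) = c, and for every probability distribution p on ℕ with mean m+α, one has H(p, y) ≤ v. In particular, v is the value of the constrained General Lotto game in which player A chooses a distribution on ℕ with mean m+α and player B chooses a distribution on ℕ with mean b whose total mass on odd numbers is at least c. -/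

import Mathlib

/-!
For a probability distribution `q` one has `H(p, q) = ∑ᵢ p(i) · H(δᵢ, q)`, and
`i ↦ H(δᵢ, q) = q([0, i)) − q((i, ∞))` increases by exactly `q(i) + q(i + 1)` from `i` to `i + 1`.
For `y^{m,α}` these increments show that `−H(δⱼ, y^{m,α})` dominates
`1 − ((1−α)/m + α/(m+1))·j + [j odd]·(1−α)/(m(m+1))` (with equality for `j ≤ 2m + 1`);
for B's strategy `y` they show that `H(δⱼ, y)` lies below an affine function of `j` of slope
`(b−c)/(m(m+1))`. Averaging these pointwise bounds against a distribution with the prescribed mean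
(and odd mass) gives `v` on both sides.
-/

open scoped BigOperators

/-- A probability distribution on ℕ. -/
def IsPMF (p : ℕ → ℝ) : Prop := (∀ i, 0 ≤ p i) ∧ (∑' i, p i) = 1

/-- `p` has (finite) mean `b`. -/
def HasMean (p : ℕ → ℝ) (b : ℝ) : Prop :=
  Summable (fun i : ℕ => (i:ℝ) * p i) ∧ (∑' i : ℕ, (i:ℝ) * p i) = b

/-- Point mass distribution at `n`. -/
noncomputable def delta (n : ℕ) : ℕ → ℝ := fun i => if i = n then 1 else 0

/-- Uniform distribution on the `m` odd numbers `1,3,…,2m-1`. -/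
noncomputable def uo (m : ℕ) : ℕ → ℝ := fun i => if Odd i ∧ i < 2*m then (1:ℝ)/m else 0

/-- Uniform distribution on the `m+1` even numbers `0,2,…,2m`. -/
noncomputable def ue (m : ℕ) : ℕ → ℝ := fun i => if Even i ∧ i ≤ 2*m then (1:ℝ)/(m+1) else 0

/-- The General Lotto payoff
`H(p,q) = Σ_{(i,j): i>j} p i · q j − Σ_{(i,j): i<j} p i · q j`. -/
noncomputable def Hpay (p q : ℕ → ℝ) : ℝ :=
  (∑' ij : ℕ × ℕ, if ij.2 < ij.1 then p ij.1 * q ij.2 else 0)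
  - (∑' ij : ℕ × ℕ, if ij.1 < ij.2 then p ij.1 * q ij.2 else 0)

/-- The distribution y^{m,α}: y(2i−1) = 2(1−α)/m + (2α−1)/(m+1) − 2i(1−α)/(m(m+1)),
y(2i) = 2i(1−α)/(m(m+1)) for i = 1,…,m, y(2m+1) = (2α−1)/(m+1), 0 elsewhere. -/
noncomputable def yma (m : ℕ) (α : ℝ) : ℕ → ℝ := fun j =>
  if j = 0 then 0
  else if j ≤ 2*m then
    (if j % 2 = 1 then
        2*(1-α)/(m:ℝ) + (2*α-1)/((m:ℝ)+1) - ((j:ℝ)+1)*(1-α)/((m:ℝ)*((m:ℝ)+1))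
     else (j:ℝ)*(1-α)/((m:ℝ)*((m:ℝ)+1)))
  else if j = 2*m+1 then (2*α-1)/((m:ℝ)+1)
  else 0

open Finset

theorem IsPMF.summable {p : ℕ → ℝ} (hp : IsPMF p) : Summable p := by
  by_contra h
  simpa [tsum_eq_zero_of_not_summable h] using hp.2

theorem IsPMF.hasSum {p : ℕ → ℝ} (hp : IsPMF p) : HasSum p 1 :=
  hp.2 ▸ hp.summable.hasSum

theorem HasMean.hasSum {p : ℕ → ℝ} {μ : ℝ} (hμ : HasMean p μ) :
    HasSum (fun i : ℕ => (i : ℝ) * p i) μ :=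
  hμ.2 ▸ hμ.1.hasSum

theorem hasSum_ite_lt {M : Type*} [AddCommMonoid M] [TopologicalSpace M] (f : ℕ → M) (k : ℕ) :
    HasSum (fun j => if j < k then f j else 0) (∑ j ∈ range k, f j) := by
  have h : HasSum (fun j => if j < k then f j else 0) (∑ j ∈ range k, if j < k then f j else 0) :=
    hasSum_sum_of_ne_finset_zero fun j hj => if_neg (by simpa using hj)
  rwa [sum_congr rfl fun j hj => if_pos (mem_range.1 hj)] at h

/-- `H(δ_i, q)` for a probability distribution `q`, written as `q([0, i)) + q([0, i]) − 1`. -/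
def payoffAt (q : ℕ → ℝ) (i : ℕ) : ℝ := ∑ j ∈ range i, q j + ∑ j ∈ range (i + 1), q j - 1

theorem payoffAt_zero (q : ℕ → ℝ) : payoffAt q 0 = q 0 - 1 := by
  simp [payoffAt]

theorem payoffAt_succ (q : ℕ → ℝ) (i : ℕ) :
    payoffAt q (i + 1) = payoffAt q i + (q i + q (i + 1)) := by
  simp only [payoffAt, sum_range_succ]
  ring

theorem payoffAt_le_of_add_succ_le {q g : ℕ → ℝ} {k : ℕ} (hk : payoffAt q k ≤ g k)
    (h : ∀ j, k ≤ j → q j + q (j + 1) ≤ g (j + 1) - g j) {j : ℕ} (hj : k ≤ j) :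
    payoffAt q j ≤ g j := by
  induction j, hj using Nat.le_induction with
  | base => exact hk
  | succ j hkj ih =>
    rw [payoffAt_succ]
    linarith [h j hkj]

theorem Hpay_swap (p q : ℕ → ℝ) : Hpay q p = -Hpay p q := by
  have swap : ∀ r : ℕ → ℕ → Prop, ∀ [DecidableRel r],
      (∑' ij : ℕ × ℕ, if r ij.2 ij.1 then q ij.1 * p ij.2 else 0)
        = ∑' ij : ℕ × ℕ, if r ij.1 ij.2 then p ij.1 * q ij.2 else 0 := fun r _ => by
    rw [← (Equiv.prodComm ℕ ℕ).tsum_eq]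
    exact tsum_congr fun ij => by simp [mul_comm]
  simp only [Hpay]
  rw [swap (· < ·), swap (· > ·)]
  ring

theorem hasSum_Hpay {p q : ℕ → ℝ} (hp0 : ∀ i, 0 ≤ p i) (hp : Summable p) (hq : IsPMF q) :
    HasSum (fun i => p i * payoffAt q i) (Hpay p q) := by
  have hpq : Summable fun ij : ℕ × ℕ => p ij.1 * q ij.2 :=
    hp.mul_of_nonneg hq.summable hp0 hq.1
  have restrict : ∀ r : ℕ → ℕ → Prop, ∀ [DecidableRel r],
      Summable fun ij : ℕ × ℕ => if r ij.1 ij.2 then p ij.1 * q ij.2 else 0 := fun r _ => by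
    have := fun ij : ℕ × ℕ => mul_nonneg (hp0 ij.1) (hq.1 ij.2)
    exact hpq.of_nonneg_of_le (fun ij => by split_ifs <;> simp [this])
      (fun ij => by split_ifs <;> simp [this])
  have below : ∀ i, HasSum (fun j => if j < i then p i * q j else 0) (p i * ∑ j ∈ range i, q j) :=
    fun i => mul_sum (range i) q (p i) ▸ hasSum_ite_lt (fun j => p i * q j) i
  have above : ∀ i, HasSum (fun j => if i < j then p i * q j else 0)
      (p i * (1 - ∑ j ∈ range (i + 1), q j)) := fun i =>
    ((hq.hasSum.sub (hasSum_ite_lt q (i + 1))).mul_left (p i)).congr_fun fun j => by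
      split_ifs <;> first | (exfalso; omega) | ring
  have := ((restrict (· > ·)).hasSum.prod_fiberwise below).sub
    ((restrict (· < ·)).hasSum.prod_fiberwise above)
  exact this.congr_fun fun i => by simp only [payoffAt]; ring

theorem HasMean.hasSum_mul_affine {p : ℕ → ℝ} {μ : ℝ} (hp : IsPMF p) (hμ : HasMean p μ)
    (A B : ℝ) : HasSum (fun i : ℕ => p i * (A + B * i)) (A + B * μ) := by
  have h := (hp.hasSum.mul_left A).add (hμ.hasSum.mul_left B)
  rw [mul_one] at h
  exact h.congr_fun fun i => by ring

theorem Summable.hasSum_mul_ite_odd {p : ℕ → ℝ} (hp : Summable p) (C : ℝ) :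
    HasSum (fun i : ℕ => p i * if Odd i then C else 0) (C * ∑' i, p (2 * i + 1)) := by
  have hodd : Summable fun i => p (2 * i + 1) :=
    hp.comp_injective fun a b h => by simpa using h
  have h := HasSum.even_add_odd (f := fun i : ℕ => p i * if Odd i then C else 0)
    (hasSum_zero.congr_fun fun k => by simp [Nat.not_odd_iff_even.2 (even_two_mul k)])
    ((hodd.hasSum.mul_left C).congr_fun fun k => by simp [mul_comm])
  rwa [zero_add] at h

theorem sum_range_two_mul {M : Type*} [AddCommMonoid M] (f : ℕ → M) (n : ℕ) :
    ∑ i ∈ range (2 * n), f i = ∑ k ∈ range n, (f (2 * k) + f (2 * k + 1)) := by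
  induction n with
  | zero => simp
  | succ n ih =>
    rw [mul_add, mul_one, sum_range_succ, sum_range_succ, sum_range_succ, ih, add_assoc]

section yma

variable {m : ℕ} {α : ℝ}

theorem yma_nonneg (hm : 1 ≤ m) (hα0 : 1 / 2 ≤ α) (hα1 : α ≤ 1) (j : ℕ) : 0 ≤ yma m α j := by
  have hm' : (1 : ℝ) ≤ m := by exact_mod_cast hm
  unfold yma
  split_ifs with h0 hj hodd
  · rfl
  · have hj' : (j : ℝ) ≤ 2 * m := by exact_mod_cast hj
    have key : 2 * (1 - α) / m + (2 * α - 1) / (m + 1) - (j + 1) * (1 - α) / (m * (m + 1))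
        = ((1 - α) * (2 * m - j + 1) + (2 * α - 1) * m) / (m * (m + 1)) := by
      field_simp
      ring
    rw [key]
    have : 0 ≤ (1 - α) * (2 * m - j + 1) := mul_nonneg (by linarith) (by linarith)
    have : 0 ≤ (2 * α - 1) * m := mul_nonneg (by linarith) (by linarith)
    positivity
  · have : 0 ≤ 1 - α := by linarith
    positivity
  · have : 0 ≤ 2 * α - 1 := by linarith
    positivity
  · rfl

theorem yma_add_yma_succ (hm : 1 ≤ m) {j : ℕ} (hj : j ≤ 2 * m) :
    yma m α j + yma m α (j + 1)
      = 1 / (m + 1) + if Odd j then 2 * ((1 - α) / (m * (m + 1))) else 0 := by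
  have hm' : (1 : ℝ) ≤ m := by exact_mod_cast hm
  rcases Nat.eq_zero_or_pos j with rfl | hj0
  · simp [yma, show 1 ≤ 2 * m by omega]
    field_simp
    ring
  rcases hj.eq_or_lt with rfl | hj2
  · simp [yma, Nat.odd_iff, show m ≠ 0 by omega]
    field_simp
    ring
  simp only [yma, Nat.odd_iff]
  split_ifs <;> first | contradiction | omega | (push_cast; field_simp; ring1)

theorem yma_eq_zero {j : ℕ} (hj : 2 * m + 2 ≤ j) : yma m α j = 0 := by
  simp only [yma]
  split_ifs <;> first | rfl | omega

theorem yma_add_yma_succ_le (hm : 1 ≤ m) (hα1 : α ≤ 1) (j : ℕ) :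
    yma m α j + yma m α (j + 1)
      ≤ 1 / (m + 1) + if Odd j then 2 * ((1 - α) / (m * (m + 1))) else 0 := by
  have hd : 0 ≤ (1 - α) / (m * (m + 1)) := div_nonneg (by linarith) (by positivity)
  rcases le_or_gt j (2 * m) with hj | hj
  · exact (yma_add_yma_succ hm hj).le
  obtain rfl | hj := show j = 2 * m + 1 ∨ 2 * m + 2 ≤ j by omega
  · have h2m : yma m α (2 * m + 1) = (2 * α - 1) / (m + 1) := by simp [yma]
    rw [h2m, yma_eq_zero le_rfl, if_pos (odd_two_mul_add_one m), add_zero]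
    have : (2 * α - 1) / (m + 1) ≤ 1 / (m + 1) := by gcongr; linarith
    linarith
  · rw [yma_eq_zero hj, yma_eq_zero (by omega), add_zero]
    split_ifs <;> positivity

theorem isPMF_yma (hm : 1 ≤ m) (hα0 : 1 / 2 ≤ α) (hα1 : α ≤ 1) : IsPMF (yma m α) := by
  refine ⟨yma_nonneg hm hα0 hα1, ?_⟩
  rw [tsum_eq_sum (s := range (2 * (m + 1))) fun j hj => yma_eq_zero (by simp at hj; omega),
    sum_range_two_mul]
  have hpair : ∀ k ∈ range (m + 1), yma m α (2 * k) + yma m α (2 * k + 1) = 1 / (m + 1) :=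
    fun k hk => by
      rw [yma_add_yma_succ hm (by simp at hk; omega),
        if_neg (Nat.not_odd_iff_even.2 (even_two_mul k)), add_zero]
  rw [sum_congr rfl hpair, sum_const, card_range, nsmul_eq_mul]
  push_cast
  field_simp

theorem payoffAt_yma_le (hm : 1 ≤ m) (hα1 : α ≤ 1) (j : ℕ) :
    payoffAt (yma m α) j
      ≤ -(1 - ((1 - α) / m + α / (m + 1)) * j + if Odd j then (1 - α) / (m * (m + 1)) else 0) := by
  have hκ : (1 - α) / m + α / (m + 1) = 1 / (m + 1) + (1 - α) / (m * (m + 1)) := by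
    have : (m : ℝ) ≠ 0 := by positivity
    field_simp
    ring
  refine payoffAt_le_of_add_succ_le
    (g := fun j : ℕ => -(1 - ((1 - α) / m + α / (m + 1)) * j
      + if Odd j then (1 - α) / (m * (m + 1)) else 0)) ?_ (fun j _ => ?_) (Nat.zero_le j)
  · simp [payoffAt_zero, yma]
  have hpair := yma_add_yma_succ_le hm hα1 j
  push_cast
  rcases Nat.even_or_odd j with hj | hj
  · simp only [if_pos hj.add_one, if_neg (Nat.not_odd_iff_even.2 hj)] at hpair ⊢
    linarith
  · simp only [if_pos hj, if_neg (Nat.not_odd_iff_even.2 hj.add_one)] at hpair ⊢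
    linarith

theorem le_Hpay_yma (hm : 1 ≤ m) (hα0 : 1 / 2 ≤ α) (hα1 : α ≤ 1) {q : ℕ → ℝ} {b : ℝ}
    (hq : IsPMF q) (hb : HasMean q b) :
    1 - ((1 - α) / m + α / (m + 1)) * b + (1 - α) / (m * (m + 1)) * ∑' i, q (2 * i + 1)
      ≤ Hpay (yma m α) q := by
  rw [Hpay_swap, sub_eq_add_neg, ← neg_mul]
  refine hasSum_le (fun j => ?_)
    ((hb.hasSum_mul_affine hq 1 _).add (hq.summable.hasSum_mul_ite_odd _))
    (hasSum_Hpay hq.1 hq.summable (isPMF_yma hm hα0 hα1)).neg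
  have := mul_le_mul_of_nonneg_left (payoffAt_yma_le hm hα1 j) (hq.1 j)
  linarith

end yma

theorem sum_range_two_mul_add {R : Type*} [CommRing R] (k : ℕ) (a : R) :
    ∑ j ∈ range k, (2 * (j : R) + a) = k * (k - 1 + a) := by
  induction k with
  | zero => simp
  | succ k ih =>
    rw [sum_range_succ, ih]
    push_cast
    ring

theorem hasSum_mul_delta_zero : HasSum (fun i : ℕ => (i : ℝ) * delta 0 i) 0 :=
  hasSum_zero.congr_fun fun i => by by_cases h : i = 0 <;> simp [delta, h]

theorem uo_two_mul (k j : ℕ) : uo k (2 * j) = 0 :=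
  if_neg fun h => Nat.not_odd_iff_even.2 (even_two_mul j) h.1

theorem uo_two_mul_add_one (k j : ℕ) : uo k (2 * j + 1) = if j < k then (1 : ℝ) / k else 0 := by
  simp [uo, show 2 * j + 1 < 2 * k ↔ j < k by omega]

theorem ue_two_mul (m j : ℕ) : ue m (2 * j) = if j < m + 1 then (1 : ℝ) / (m + 1) else 0 := by
  simp [ue, show 2 * j ≤ 2 * m ↔ j < m + 1 by omega]

theorem ue_two_mul_add_one (m j : ℕ) : ue m (2 * j + 1) = 0 :=
  if_neg fun h => Nat.not_even_iff_odd.2 (odd_two_mul_add_one j) h.1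

theorem hasSum_uo_two_mul_add_one {k : ℕ} (hk : k ≠ 0) :
    HasSum (fun j => uo k (2 * j + 1)) 1 := by
  have h := (hasSum_ite_lt (fun _ => (1 : ℝ) / k) k).congr_fun (uo_two_mul_add_one k)
  rwa [sum_const, card_range, nsmul_eq_mul, mul_one_div_cancel (by exact_mod_cast hk)] at h

theorem hasSum_uo {k : ℕ} (hk : k ≠ 0) : HasSum (uo k) 1 := by
  simpa using (hasSum_zero.congr_fun (uo_two_mul k)).even_add_odd (hasSum_uo_two_mul_add_one hk)

theorem hasSum_mul_uo {k : ℕ} (hk : k ≠ 0) : HasSum (fun i : ℕ => (i : ℝ) * uo k i) k := by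
  have h := hasSum_ite_lt (fun j : ℕ => (2 * (j : ℝ) + 1) / k) k
  rw [← sum_div, sum_range_two_mul_add, sub_add_cancel,
    mul_div_cancel_left₀ _ (by exact_mod_cast hk)] at h
  have hodd : HasSum (fun j : ℕ => ((2 * j + 1 : ℕ) : ℝ) * uo k (2 * j + 1)) k :=
    h.congr_fun fun j => by rw [uo_two_mul_add_one]; split_ifs <;> push_cast <;> ring
  simpa using HasSum.even_add_odd (f := fun i : ℕ => (i : ℝ) * uo k i)
    (hasSum_zero.congr_fun fun j => by simp [uo_two_mul]) hodd

theorem hasSum_ue (m : ℕ) : HasSum (ue m) 1 := by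
  have h := (hasSum_ite_lt (fun _ => (1 : ℝ) / (m + 1)) (m + 1)).congr_fun (ue_two_mul m)
  rw [sum_const, card_range, nsmul_eq_mul, Nat.cast_succ, mul_one_div_cancel (by positivity)] at h
  simpa using h.even_add_odd (hasSum_zero.congr_fun (ue_two_mul_add_one m))

theorem hasSum_mul_ue (m : ℕ) : HasSum (fun i : ℕ => (i : ℝ) * ue m i) m := by
  have h := hasSum_ite_lt (fun j : ℕ => 2 * (j : ℝ) / (m + 1)) (m + 1)
  have hsum := sum_range_two_mul_add (m + 1) (0 : ℝ)
  simp only [add_zero, Nat.cast_succ, add_sub_cancel_right] at hsum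
  rw [← sum_div, hsum, mul_div_cancel_left₀ _ (by positivity)] at h
  have heven : HasSum (fun j : ℕ => ((2 * j : ℕ) : ℝ) * ue m (2 * j)) m :=
    h.congr_fun fun j => by rw [ue_two_mul]; split_ifs <;> push_cast <;> ring
  simpa using HasSum.even_add_odd (f := fun i : ℕ => (i : ℝ) * ue m i) heven
    (hasSum_zero.congr_fun fun j => by simp [ue_two_mul_add_one])

theorem uo_add_uo_succ_le (k j : ℕ) : uo k j + uo k (j + 1) ≤ 1 / k := by
  unfold uo
  split_ifs with h1 h2 h2
  · exact absurd h1.1 (Nat.odd_add_one.1 h2.1)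
  all_goals simp

theorem ue_add_ue_succ_le (m j : ℕ) : ue m j + ue m (j + 1) ≤ 1 / (m + 1) := by
  unfold ue
  split_ifs with h1 h2 h2
  · exact absurd h1.1 (Nat.even_add_one.1 h2.1)
  all_goals simp; try positivity

theorem uo_nonneg (k j : ℕ) : 0 ≤ uo k j := by
  unfold uo; split_ifs <;> positivity

theorem ue_nonneg (m j : ℕ) : 0 ≤ ue m j := by
  unfold ue; split_ifs <;> positivity

theorem delta_nonneg (n j : ℕ) : 0 ≤ delta n j := by
  unfold delta; split_ifs <;> norm_num

noncomputable def yStar (m : ℕ) (b c : ℝ) : ℕ → ℝ := fun i =>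
  (1 - (b - c) / m) * delta 0 i + c * uo (m + 1) i + ((b - c * (m + 1)) / m) * ue m i

section yStar

variable {m : ℕ} {b c : ℝ}

theorem hasSum_yStar (hm : m ≠ 0) : HasSum (yStar m b c) 1 := by
  have h := (((hasSum_ite_eq 0 (1 : ℝ)).mul_left (1 - (b - c) / m)).add
    ((hasSum_uo m.succ_ne_zero).mul_left c)).add ((hasSum_ue m).mul_left ((b - c * (m + 1)) / m))
  have hval : (1 - (b - c) / m) * 1 + c * 1 + (b - c * (m + 1)) / m * 1 = (1 : ℝ) := by
    field_simp
    ring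
  rwa [hval] at h

theorem hasSum_mul_yStar (hm : m ≠ 0) : HasSum (fun i : ℕ => (i : ℝ) * yStar m b c i) b := by
  have h := ((hasSum_mul_delta_zero.mul_left (1 - (b - c) / m)).add
    ((hasSum_mul_uo m.succ_ne_zero).mul_left c)).add
    ((hasSum_mul_ue m).mul_left ((b - c * (m + 1)) / m))
  have hval : (1 - (b - c) / m) * 0 + c * (m.succ : ℝ) + (b - c * (m + 1)) / m * m = b := by
    push_cast
    field_simp
    ring
  rw [hval] at h
  exact h.congr_fun fun i => by simp only [yStar]; ring

theorem hasSum_yStar_two_mul_add_one : HasSum (fun i => yStar m b c (2 * i + 1)) c := by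
  have h := (hasSum_uo_two_mul_add_one m.succ_ne_zero).mul_left c
  rw [mul_one] at h
  exact h.congr_fun fun i => by simp [yStar, delta, ue_two_mul_add_one]

theorem yStar_nonneg (hm : 1 ≤ m) (hb : b ≤ m) (hc : 0 ≤ c) (hcb : c * (m + 1) ≤ b) (i : ℕ) :
    0 ≤ yStar m b c i := by
  have hm' : (0 : ℝ) < m := by exact_mod_cast hm
  have hx : 0 ≤ 1 - (b - c) / m := by rw [sub_nonneg, div_le_one hm']; linarith
  have hz : 0 ≤ (b - c * (m + 1)) / m := div_nonneg (by linarith) hm'.le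
  have := mul_nonneg hx (delta_nonneg 0 i)
  have := mul_nonneg hc (uo_nonneg (m + 1) i)
  have := mul_nonneg hz (ue_nonneg m i)
  simp only [yStar]
  linarith

theorem yStar_zero (hm : m ≠ 0) :
    yStar m b c 0 = 1 - (b - c) / m + (b - c * (m + 1)) / (m * (m + 1)) := by
  simp [yStar, delta, uo, ue]
  field_simp

theorem yStar_one : yStar m b c 1 = c / (m + 1) := by
  simp [yStar, delta, uo, ue, show 1 < 2 * (m + 1) by omega, div_eq_mul_inv]

theorem yStar_add_yStar_succ_le (hm : m ≠ 0) (hc : 0 ≤ c) (hcb : c * (m + 1) ≤ b) {j : ℕ}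
    (hj : 1 ≤ j) :
    yStar m b c j + yStar m b c (j + 1) ≤ (b - c) / (m * (m + 1)) := by
  have hz : 0 ≤ (b - c * (m + 1)) / m := div_nonneg (by linarith) (by positivity)
  have ho := mul_le_mul_of_nonneg_left (uo_add_uo_succ_le (m + 1) j) hc
  have he := mul_le_mul_of_nonneg_left (ue_add_ue_succ_le m j) hz
  simp only [yStar, delta, if_neg (show j ≠ 0 by omega), if_neg (show j + 1 ≠ 0 by omega)]
  have hval : c * (1 / ((m + 1 : ℕ) : ℝ)) + (b - c * (m + 1)) / m * (1 / (m + 1))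
      = (b - c) / (m * (m + 1)) := by
    push_cast
    field_simp
    ring
  linarith

theorem payoffAt_yStar_le (hm : 1 ≤ m) (hb : b ≤ m) (hc : 0 ≤ c) (hcb : c * (m + 1) ≤ b)
    (j : ℕ) :
    payoffAt (yStar m b c) j ≤ 1 - c / (m + 1) - (b - c) / (m * (m + 1)) * (2 * m + 1 - j) := by
  have hm0 : m ≠ 0 := by omega
  have hm' : (0 : ℝ) < m := by exact_mod_cast hm
  set g : ℕ → ℝ := fun j => 1 - c / (m + 1) - (b - c) / (m * (m + 1)) * (2 * m + 1 - j)
  have hone : payoffAt (yStar m b c) 1 = g 1 := by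
    rw [payoffAt_succ, payoffAt_zero, yStar_zero hm0, yStar_one]
    simp only [g]
    field_simp
    ring
  rcases Nat.eq_zero_or_pos j with rfl | hj
  · -- the step from `0` to `1` exceeds the slope of `g` by the weight `1 - (b - c) / m` of `δ_0`
    have hstep : yStar m b c 0 + yStar m b c 1 = (1 - (b - c) / m) + (g 1 - g 0) := by
      rw [yStar_zero hm0, yStar_one]
      simp only [g]
      field_simp
      ring
    have hx : 0 ≤ 1 - (b - c) / m := by rw [sub_nonneg, div_le_one hm']; linarith
    have := payoffAt_succ (yStar m b c) 0
    simp only [zero_add] at this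
    change payoffAt (yStar m b c) 0 ≤ g 0
    linarith
  refine payoffAt_le_of_add_succ_le (g := g) hone.le (fun i hi => ?_) hj
  have hslope : g (i + 1) - g i = (b - c) / (m * (m + 1)) := by
    simp only [g]
    push_cast
    ring
  linarith [yStar_add_yStar_succ_le hm0 hc hcb hi]

theorem isPMF_yStar (hm : 1 ≤ m) (hb : b ≤ m) (hc : 0 ≤ c) (hcb : c * (m + 1) ≤ b) :
    IsPMF (yStar m b c) :=
  ⟨yStar_nonneg hm hb hc hcb, (hasSum_yStar (by omega)).tsum_eq⟩

theorem Hpay_yStar_le (hm : 1 ≤ m) (hb : b ≤ m) (hc : 0 ≤ c) (hcb : c * (m + 1) ≤ b)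
    {p : ℕ → ℝ} {μ : ℝ} (hp : IsPMF p) (hμ : HasMean p μ) :
    Hpay p (yStar m b c) ≤ 1 - c / (m + 1) - (b - c) / (m * (m + 1)) * (2 * m + 1 - μ) := by
  set B := (b - c) / (m * (m + 1))
  refine (hasSum_le (fun i => ?_) (hasSum_Hpay hp.1 hp.summable (isPMF_yStar hm hb hc hcb))
    (hμ.hasSum_mul_affine hp (1 - c / (m + 1) - B * (2 * m + 1)) B)).trans_eq (by ring)
  refine mul_le_mul_of_nonneg_left ((payoffAt_yStar_le hm hb hc hcb i).trans_eq ?_) (hp.1 i)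
  ring

end yStar

theorem stmt12_general (m : ℕ) (hm : 1 ≤ m) (α b c : ℝ)
    (hα0 : 1/2 ≤ α) (hα1 : α < 1) (hb1 : b ≤ (m:ℝ))
    (hc0 : 0 < c) (hc1 : c ≤ b/((m:ℝ)+1))
    (v : ℝ) (hv : v = 1 - (1-α)*b/(m:ℝ) - α*b/((m:ℝ)+1) + (1-α)*c/((m:ℝ)*((m:ℝ)+1))) :
    (∀ q : ℕ → ℝ, IsPMF q → HasMean q b → c ≤ (∑' i : ℕ, q (2*i+1)) →
      v ≤ Hpay (yma m α) q) ∧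
    (IsPMF (fun i => (1 - (b-c)/(m:ℝ)) * delta 0 i + c * uo (m+1) i
        + ((b - c*((m:ℝ)+1))/(m:ℝ)) * ue m i) ∧
     HasMean (fun i => (1 - (b-c)/(m:ℝ)) * delta 0 i + c * uo (m+1) i
        + ((b - c*((m:ℝ)+1))/(m:ℝ)) * ue m i) b ∧
     (∑' i : ℕ, ((1 - (b-c)/(m:ℝ)) * delta 0 (2*i+1) + c * uo (m+1) (2*i+1)
        + ((b - c*((m:ℝ)+1))/(m:ℝ)) * ue m (2*i+1))) = c ∧
     (∀ p : ℕ → ℝ, IsPMF p → HasMean p ((m:ℝ)+α) →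
        Hpay p (fun i => (1 - (b-c)/(m:ℝ)) * delta 0 i + c * uo (m+1) i
          + ((b - c*((m:ℝ)+1))/(m:ℝ)) * ue m i) ≤ v)) := by
  have hm0 : m ≠ 0 := by omega
  have hcb : c * (m + 1) ≤ b := (le_div_iff₀ (by positivity)).1 hc1
  have hmean := hasSum_mul_yStar (b := b) (c := c) hm0
  refine ⟨fun q hq hb hodd => ?_, isPMF_yStar hm hb1 hc0.le hcb, ⟨hmean.summable, hmean.tsum_eq⟩,
    hasSum_yStar_two_mul_add_one.tsum_eq, fun p hp hμ => ?_⟩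
  · have hd : 0 ≤ (1 - α) / (m * (m + 1)) := div_nonneg (by linarith) (by positivity)
    calc v = 1 - ((1 - α) / m + α / (m + 1)) * b + (1 - α) / (m * (m + 1)) * c := by
          rw [hv]; ring
      _ ≤ 1 - ((1 - α) / m + α / (m + 1)) * b + (1 - α) / (m * (m + 1)) * ∑' i, q (2 * i + 1) := by
          gcongr
      _ ≤ Hpay (yma m α) q := le_Hpay_yma hm hα0 hα1.le hq hb
  · refine (Hpay_yStar_le hm hb1 hc0.le hcb hp hμ).trans_eq ?_
    rw [hv]
    field_simp
    ring

/-- the value and optimal strategies of the constrained General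
Lotto game for 1/2 ≤ α < 1. -/
theorem stmt12 (m : ℕ) (hm : 1 ≤ m) (α b c : ℝ)
    (hα0 : 1/2 ≤ α) (hα1 : α < 1) (hb0 : 0 < b) (hb1 : b ≤ (m:ℝ))
    (hc0 : 0 < c) (hc1 : c ≤ b/((m:ℝ)+1))
    (v : ℝ) (hv : v = 1 - (1-α)*b/(m:ℝ) - α*b/((m:ℝ)+1) + (1-α)*c/((m:ℝ)*((m:ℝ)+1))) :
    (∀ q : ℕ → ℝ, IsPMF q → HasMean q b → c ≤ (∑' i : ℕ, q (2*i+1)) →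
      v ≤ Hpay (yma m α) q) ∧
    (IsPMF (fun i => (1 - (b-c)/(m:ℝ)) * delta 0 i + c * uo (m+1) i
        + ((b - c*((m:ℝ)+1))/(m:ℝ)) * ue m i) ∧
     HasMean (fun i => (1 - (b-c)/(m:ℝ)) * delta 0 i + c * uo (m+1) i
        + ((b - c*((m:ℝ)+1))/(m:ℝ)) * ue m i) b ∧
     (∑' i : ℕ, ((1 - (b-c)/(m:ℝ)) * delta 0 (2*i+1) + c * uo (m+1) (2*i+1)
        + ((b - c*((m:ℝ)+1))/(m:ℝ)) * ue m (2*i+1))) = c ∧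
     (∀ p : ℕ → ℝ, IsPMF p → HasMean p ((m:ℝ)+α) →
        Hpay p (fun i => (1 - (b-c)/(m:ℝ)) * delta 0 i + c * uo (m+1) i
          + ((b - c*((m:ℝ)+1))/(m:ℝ)) * ue m i) ≤ v)) :=
  stmt12_general m hm α b c hα0 hα1 hb1 hc0 hc1 v hv
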